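/- Let K be a field, A an associative unital K-algebra which is a domain, σ a K-algebra automorphism of A, and ∂ : A → A a locally nilpotent right skew σ-derivation which is right regular and satisfies σ∂σ⁻¹ = q'·∂ for some q' ∈ Kˣ. Let e ∈ A be a σ-eigenvector of ∂-degree m, and suppose that the multiplicative set {e^n : n ∈ ℕ} satisfies the left and right Ore conditions in A. Then the multiplicative set {(∂^m(e))^n : n ∈ ℕ} also satisfies the left and right Ore conditions in A. -/

import Mathlib

/-!
Filter `A` by `δ`-degree. The twisted Leibniz rule
`δ^N (x y) = ∑ [N choose i]_{q⁻¹} δ^i x · σ^i (δ^(N-i) y)` puts the top term of `x y` at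
degree `deg x + deg y`, equal to `[p + r choose p] δ^p x · σ^p (δ^r y)`. Right regularity,
tested on eigenvectors of every degree (derivatives of powers of `e`), makes these Gaussian
binomials nonzero, so degrees add and the top term of `e^p` is a nonzero multiple of `f^p`,
where `f = δ^m e`. If `a` has degree `d` and `a e^k = e^(n+d) b`, comparing top terms gives
`δ^d a · f^k = f^(n+d) w` with `δ w = 0`; this is also the top term of `f^n b'` for some `b'`
built from `e^d`, so `a f^k - f^n b'` has lower degree, and induction on the degree gives the
right Ore condition for the powers of `f`. The left one is symmetric.
-/

open Finset

/-- The Gaussian binomial coefficient `[N choose i]_q`. -/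
def qBinom {R : Type*} [Semiring R] (q : R) : ℕ → ℕ → R
  | _, 0 => 1
  | 0, _ + 1 => 0
  | N + 1, i + 1 => qBinom q N i + q ^ (i + 1) * qBinom q N (i + 1)

theorem qBinom_eq_zero_of_lt {R : Type*} [Semiring R] (q : R) :
    ∀ {N i : ℕ}, N < i → qBinom q N i = 0
  | 0, _ + 1, _ => rfl
  | N + 1, i + 1, h => by
    rw [qBinom, qBinom_eq_zero_of_lt q (by omega : N < i),
      qBinom_eq_zero_of_lt q (by omega : N < i + 1), mul_zero, add_zero]

section Degree

variable {R M : Type*} [Semiring R] [AddCommMonoid M] [Module R M]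

def HasDegree (δ : Module.End R M) (x : M) (d : ℕ) : Prop :=
  (δ ^ d) x ≠ 0 ∧ (δ ^ (d + 1)) x = 0

variable {δ : Module.End R M} {x : M} {d : ℕ}

theorem HasDegree.ne_zero (h : HasDegree δ x d) : x ≠ 0 := by
  rintro rfl
  exact h.1 (map_zero _)

theorem HasDegree.unique {d' : ℕ} (h : HasDegree δ x d) (h' : HasDegree δ x d') : d = d' := by
  by_contra hne
  rcases Nat.lt_or_gt_of_ne hne with hlt | hlt
  · exact h'.1 (Module.End.pow_map_zero_of_le hlt h.2)
  · exact h.1 (Module.End.pow_map_zero_of_le hlt h'.2)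

theorem exists_hasDegree (hln : ∃ n, (δ ^ n) x = 0) (hx : x ≠ 0) :
    ∃ d, HasDegree δ x d := by
  classical
  have hpos : 0 < Nat.find hln :=
    Nat.pos_of_ne_zero fun h => hx (by simpa [h] using Nat.find_spec hln)
  refine ⟨Nat.find hln - 1, Nat.find_min hln (by omega), ?_⟩
  rw [Nat.sub_add_cancel hpos]
  exact Nat.find_spec hln

theorem HasDegree.pow_apply (h : HasDegree δ x d) {j : ℕ} (hj : j ≤ d) :
    HasDegree δ ((δ ^ j) x) (d - j) := by
  simp only [HasDegree, ← Module.End.mul_apply, ← pow_add]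
  rw [Nat.sub_add_cancel hj, show d - j + 1 + j = d + 1 by omega]
  exact h

end Degree

section SkewDerivation

variable {K A : Type*} [Field K] [Ring A] [Algebra K A]

theorem AlgEquiv.pow_apply_of_apply_eq_smul {R B : Type*} [CommSemiring R] [Semiring B]
    [Algebra R B] {σ : B ≃ₐ[R] B} {x : B} {t : R} (h : σ x = t • x) (i : ℕ) :
    (σ ^ i) x = t ^ i • x := by
  induction i with
  | zero => simp
  | succ i ih => rw [pow_succ', AlgEquiv.mul_apply, ih, map_smul, h, smul_smul, pow_succ]

theorem AlgEquiv.symm_apply_of_apply_eq_smul {σ : A ≃ₐ[K] A} {x : A} {t : K}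
    (h : σ x = t • x) : σ.symm x = t⁻¹ • x := by
  rcases eq_or_ne t 0 with rfl | ht
  · rw [zero_smul, map_eq_zero_iff _ σ.injective] at h
    simp [h]
  · apply σ.injective
    rw [σ.apply_symm_apply, map_smul, h, smul_smul, inv_mul_cancel₀ ht, one_smul]

theorem AlgEquiv.ne_zero_of_apply_eq_smul {σ : A ≃ₐ[K] A} {x : A} {t : K} (hx : x ≠ 0)
    (h : σ x = t • x) : t ≠ 0 := by
  rintro rfl
  exact hx (by rwa [zero_smul, map_eq_zero_iff _ σ.injective] at h)

def HasTopTerm (δ : Module.End K A) (x : A) (d : ℕ) (y : A) : Prop :=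
  (δ ^ (d + 1)) x = 0 ∧ ∃ c : K, c ≠ 0 ∧ (δ ^ d) x = c • y

theorem HasTopTerm.hasDegree {δ : Module.End K A} {x y : A} {d : ℕ} (h : HasTopTerm δ x d y)
    (hy : y ≠ 0) : HasDegree δ x d := by
  obtain ⟨hvan, c, hc, htop⟩ := h
  exact ⟨by rw [htop]; exact smul_ne_zero hc hy, hvan⟩

structure IsQSkewDerivation (σ : A ≃ₐ[K] A) (δ : Module.End K A) (q : Kˣ) : Prop where
  apply_mul : ∀ a b : A, δ (a * b) = δ a * σ b + a * δ b
  conj : ∀ a : A, σ (δ (σ.symm a)) = (q : K) • δ a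

namespace IsQSkewDerivation

variable {σ : A ≃ₐ[K] A} {δ : Module.End K A} {q : Kˣ}

theorem apply_one (hδ : IsQSkewDerivation σ δ q) : δ 1 = 0 := by
  simpa using hδ.apply_mul 1 1

theorem apply_map (hδ : IsQSkewDerivation σ δ q) (x : A) :
    δ (σ x) = (q : K)⁻¹ • σ (δ x) := by
  rw [← σ.symm_apply_apply x, hδ.conj, σ.symm_apply_apply, smul_smul,
    inv_mul_cancel₀ q.ne_zero, one_smul]

theorem apply_pow_apply (hδ : IsQSkewDerivation σ δ q) (i : ℕ) (x : A) :
    δ ((σ ^ i) x) = (q : K)⁻¹ ^ i • (σ ^ i) (δ x) := by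
  induction i with
  | zero => simp
  | succ i ih =>
    rw [pow_succ', AlgEquiv.mul_apply, hδ.apply_map, ih, map_smul, smul_smul, pow_succ',
      AlgEquiv.mul_apply]

theorem apply_pow_apply_eq_zero_iff (hδ : IsQSkewDerivation σ δ q) (i : ℕ) (x : A) :
    δ ((σ ^ i) x) = 0 ↔ δ x = 0 := by
  rw [hδ.apply_pow_apply, smul_eq_zero, map_eq_zero_iff _ (σ ^ i).injective]
  simp [q.ne_zero]

theorem map_pow_apply_of_apply_eq_smul (hδ : IsQSkewDerivation σ δ q) {x : A} {t : K}
    (hx : σ x = t • x) (j : ℕ) : σ ((δ ^ j) x) = ((q : K) ^ j * t) • (δ ^ j) x := by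
  induction j with
  | zero => simpa using hx
  | succ j ih =>
    have hcomm : σ (δ ((δ ^ j) x)) = (q : K) • δ (σ ((δ ^ j) x)) := by
      simpa using hδ.conj (σ ((δ ^ j) x))
    rw [pow_succ', Module.End.mul_apply, hcomm, ih, map_smul, smul_smul]
    ring_nf

theorem apply_pow_eq_zero (hδ : IsQSkewDerivation σ δ q) {x : A} (hx : δ x = 0) (p : ℕ) :
    δ (x ^ p) = 0 := by
  induction p with
  | zero => simpa using hδ.apply_one
  | succ p ih => rw [pow_succ, hδ.apply_mul, ih, hx, zero_mul, mul_zero, add_zero]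

theorem pow_apply_const_mul (hδ : IsQSkewDerivation σ δ q) {x : A} (hx : δ x = 0) (N : ℕ)
    (y : A) : (δ ^ N) (x * y) = x * (δ ^ N) y := by
  induction N generalizing y with
  | zero => rfl
  | succ N ih =>
    rw [pow_succ, Module.End.mul_apply, hδ.apply_mul, hx, zero_mul, zero_add, ih,
      ← Module.End.mul_apply, ← pow_succ]

theorem pow_apply_mul_const (hδ : IsQSkewDerivation σ δ q) {y : A} (hy : δ y = 0) (N : ℕ)
    (x : A) : (δ ^ N) (x * y) = (δ ^ N) x * (σ ^ N) y := by
  induction N generalizing x y with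
  | zero => rfl
  | succ N ih =>
    have hσy : δ (σ y) = 0 := by simpa using (hδ.apply_pow_apply_eq_zero_iff 1 y).2 hy
    rw [pow_succ, Module.End.mul_apply, hδ.apply_mul, hy, mul_zero, add_zero, ih hσy,
      ← Module.End.mul_apply, ← pow_succ, ← AlgEquiv.mul_apply, ← pow_succ]

theorem exists_pow_apply_eq_mul_const (hδ : IsQSkewDerivation σ δ q) {g y w : A} {c : K}
    {d D : ℕ} (hc : c ≠ 0) (hdD : d ≤ D) (hg : (δ ^ D) g = c • y) (hw : δ w = 0) :
    ∃ b, (δ ^ d) b = y * w := by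
  set x := (σ ^ D).symm w
  have hx : δ x = 0 := (hδ.apply_pow_apply_eq_zero_iff _ _).1 (by rwa [AlgEquiv.apply_symm_apply])
  refine ⟨c⁻¹ • (δ ^ (D - d)) (g * x), ?_⟩
  rw [map_smul, ← Module.End.mul_apply, ← pow_add, Nat.add_sub_cancel' hdD,
    hδ.pow_apply_mul_const hx, hg, AlgEquiv.apply_symm_apply, smul_mul_assoc, inv_smul_smul₀ hc]

theorem exists_pow_apply_eq_const_mul (hδ : IsQSkewDerivation σ δ q) {g y w : A} {c : K}
    {d D : ℕ} (hc : c ≠ 0) (hdD : d ≤ D) (hg : (δ ^ D) g = c • y) (hw : δ w = 0) :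
    ∃ b, (δ ^ d) b = w * y := by
  refine ⟨c⁻¹ • (δ ^ (D - d)) (w * g), ?_⟩
  rw [map_smul, ← Module.End.mul_apply, ← pow_add, Nat.add_sub_cancel' hdD,
    hδ.pow_apply_const_mul hw, hg, mul_smul_comm, inv_smul_smul₀ hc]

theorem pow_apply_mul (hδ : IsQSkewDerivation σ δ q) (N : ℕ) (x y : A) :
    (δ ^ N) (x * y) = ∑ i ∈ range (N + 1),
      qBinom ((q : K)⁻¹) N i • ((δ ^ i) x * (σ ^ i) ((δ ^ (N - i)) y)) := by
  induction N with
  | zero => simp [qBinom]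
  | succ N ih =>
    set T : ℕ → A := fun i => (δ ^ i) x * (σ ^ i) ((δ ^ (N + 1 - i)) y) with hT
    have hterm : ∀ i ∈ range (N + 1),
        δ (qBinom (q : K)⁻¹ N i • ((δ ^ i) x * (σ ^ i) ((δ ^ (N - i)) y))) =
          qBinom (q : K)⁻¹ N i • T (i + 1) +
            ((q : K)⁻¹ ^ i * qBinom (q : K)⁻¹ N i) • T i := by
      intro i hi
      have hiN : N + 1 - i = N - i + 1 := by have := mem_range.1 hi; omega
      rw [map_smul, hδ.apply_mul, hδ.apply_pow_apply, smul_add, mul_smul_comm, smul_smul,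
        mul_comm]
      simp only [hT, hiN, Nat.add_sub_add_right, pow_succ', Module.End.mul_apply,
        AlgEquiv.mul_apply]
    rw [pow_succ', Module.End.mul_apply, ih, map_sum, sum_congr rfl hterm, sum_add_distrib,
      sum_range_succ' _ (N + 1), sum_range_succ' (fun i => (_ * _) • T i)]
    change _ = ∑ i ∈ range (N + 1), qBinom (q : K)⁻¹ (N + 1) (i + 1) • T (i + 1) +
      qBinom (q : K)⁻¹ (N + 1) 0 • T 0
    simp only [qBinom, add_smul, sum_add_distrib]
    rw [sum_range_succ (fun i => (_ * qBinom (q : K)⁻¹ N (i + 1)) • T (i + 1)),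
      qBinom_eq_zero_of_lt _ N.lt_succ_self, mul_zero, zero_smul, add_zero, pow_zero, one_mul]
    abel

theorem pow_apply_mul_eq_zero (hδ : IsQSkewDerivation σ δ q) {x y : A} {p r : ℕ}
    (hx : (δ ^ (p + 1)) x = 0) (hy : (δ ^ (r + 1)) y = 0) : (δ ^ (p + r + 1)) (x * y) = 0 := by
  rw [hδ.pow_apply_mul]
  refine sum_eq_zero fun i _ => ?_
  rcases le_or_gt i p with h | h
  · rw [Module.End.pow_map_zero_of_le (by omega) hy, map_zero, mul_zero, smul_zero]
  · rw [Module.End.pow_map_zero_of_le h hx, zero_mul, smul_zero]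

theorem pow_add_apply_mul (hδ : IsQSkewDerivation σ δ q) {x y : A} {p r : ℕ}
    (hx : (δ ^ (p + 1)) x = 0) (hy : (δ ^ (r + 1)) y = 0) :
    (δ ^ (p + r)) (x * y) =
      qBinom (q : K)⁻¹ (p + r) p • ((δ ^ p) x * (σ ^ p) ((δ ^ r) y)) := by
  rw [hδ.pow_apply_mul, sum_eq_single_of_mem p (by simp) ?_, Nat.add_sub_cancel_left]
  intro i _ hne
  rcases hne.lt_or_gt with h | h
  · rw [Module.End.pow_map_zero_of_le (by omega) hy, map_zero, mul_zero, smul_zero]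
  · rw [Module.End.pow_map_zero_of_le h hx, zero_mul, smul_zero]

theorem hasDegree_mul [IsDomain A] (hδ : IsQSkewDerivation σ δ q) {x y : A} {p r : ℕ}
    (hqB : qBinom (q : K)⁻¹ (p + r) p ≠ 0) (hx : HasDegree δ x p) (hy : HasDegree δ y r) :
    HasDegree δ (x * y) (p + r) := by
  refine ⟨?_, hδ.pow_apply_mul_eq_zero hx.2 hy.2⟩
  rw [hδ.pow_add_apply_mul hx.2 hy.2]
  exact smul_ne_zero hqB (mul_ne_zero hx.1 ((map_ne_zero_iff _ (σ ^ p).injective).2 hy.1))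

end IsQSkewDerivation

def IsRightRegularSkewDerivation (σ : A ≃ₐ[K] A) (δ : Module.End K A) : Prop :=
  ∀ (a b : A) (ta tb : K) (m n : ℕ),
    a ≠ 0 → σ a = ta • a → (δ ^ (m + 1)) a = 0 → (δ ^ m) a ≠ 0 →
    b ≠ 0 → σ b = tb • b → (δ ^ (n + 1)) b = 0 → (δ ^ n) b ≠ 0 →
    ∀ k : ℕ, n ≤ k → k ≤ m + n →
      ∃ s : ℕ → K, s 0 ≠ 0 ∧
        (δ ^ k) (a * b) =
          ∑ i ∈ Finset.range (m + n - k + 1),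
            s i • ((δ ^ (k - n + i)) a * (δ ^ (n - i)) b)

namespace IsRightRegularSkewDerivation

variable {σ : A ≃ₐ[K] A} {δ : Module.End K A} {q : Kˣ}

theorem exists_pow_add_apply_mul (hreg : IsRightRegularSkewDerivation σ δ) {a b : A}
    {ta tb : K} {m n : ℕ} (ha : σ a = ta • a) (hma : HasDegree δ a m) (hb : σ b = tb • b)
    (hnb : HasDegree δ b n) :
    ∃ s : K, s ≠ 0 ∧ (δ ^ (m + n)) (a * b) = s • ((δ ^ m) a * (δ ^ n) b) := by
  obtain ⟨s, hs, h⟩ := hreg a b ta tb m n hma.ne_zero ha hma.2 hma.1 hnb.ne_zero hb hnb.2 hnb.1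
    (m + n) (by omega) le_rfl
  exact ⟨s 0, hs, by simpa using h⟩

theorem qBinom_ne_zero [IsDomain A] (hreg : IsRightRegularSkewDerivation σ δ)
    (hδ : IsQSkewDerivation σ δ q) {a b : A} {ta tb : K} {M N : ℕ} (ha : σ a = ta • a)
    (hMa : HasDegree δ a M) (hb : σ b = tb • b) (hNb : HasDegree δ b N) :
    qBinom (q : K)⁻¹ (M + N) M ≠ 0 := by
  obtain ⟨s, hs, h⟩ := hreg.exists_pow_add_apply_mul ha hMa hb hNb
  rw [hδ.pow_add_apply_mul hMa.2 hNb.2, AlgEquiv.pow_apply_of_apply_eq_smul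
    (hδ.map_pow_apply_of_apply_eq_smul hb N), mul_smul_comm, smul_smul] at h
  intro h0
  rw [h0, zero_mul, zero_smul] at h
  exact hs ((smul_eq_zero.1 h.symm).resolve_right (mul_ne_zero hMa.1 hNb.1))

theorem hasTopTerm_pow [IsDomain A] (hreg : IsRightRegularSkewDerivation σ δ)
    (hδ : IsQSkewDerivation σ δ q) {e : A} {te : K} {m : ℕ} (heig : σ e = te • e)
    (he : HasDegree δ e m) (p : ℕ) :
    HasTopTerm δ (e ^ p) (m * p) (((δ ^ m) e) ^ p) := by
  induction p with
  | zero => exact ⟨by simpa using hδ.apply_one, 1, one_ne_zero, by simp⟩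
  | succ p ih =>
    have hdeg : HasDegree δ (e ^ p) (m * p) := ih.hasDegree (pow_ne_zero _ he.1)
    obtain ⟨hvan, c, hc, htop⟩ := ih
    obtain ⟨s, hs, h⟩ := hreg.exists_pow_add_apply_mul heig he
      (by rw [map_pow, heig, smul_pow]) hdeg
    rw [show m * (p + 1) = m + m * p by ring, pow_succ']
    refine ⟨hδ.pow_apply_mul_eq_zero he.2 hvan, s * c, mul_ne_zero hs hc, ?_⟩
    rw [h, htop, mul_smul_comm, smul_smul, ← pow_succ']

theorem qBinom_ne_zero_of_pos [IsDomain A] (hreg : IsRightRegularSkewDerivation σ δ)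
    (hδ : IsQSkewDerivation σ δ q) {e : A} {te : K} {m : ℕ} (heig : σ e = te • e)
    (he : HasDegree δ e m) (hm : 0 < m) (M N : ℕ) : qBinom (q : K)⁻¹ (M + N) M ≠ 0 := by
  have heigen : ∀ M, ∃ (a : A) (t : K), σ a = t • a ∧ HasDegree δ a M := by
    intro M
    have hdeg := (hreg.hasTopTerm_pow hδ heig he M).hasDegree (pow_ne_zero _ he.1)
    have hM : M ≤ m * M := Nat.le_mul_of_pos_left M hm
    refine ⟨(δ ^ (m * M - M)) (e ^ M), _, hδ.map_pow_apply_of_apply_eq_smul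
      (by rw [map_pow, heig, smul_pow]) _, ?_⟩
    simpa [Nat.sub_sub_self hM] using hdeg.pow_apply (Nat.sub_le (m * M) M)
  obtain ⟨a, ta, ha, hMa⟩ := heigen M
  obtain ⟨b, tb, hb, hNb⟩ := heigen N
  exact hreg.qBinom_ne_zero hδ ha hMa hb hNb

end IsRightRegularSkewDerivation

section Ore

variable {σ : A ≃ₐ[K] A} {δ : Module.End K A} {q : Kˣ}

theorem exists_mul_pow_eq_pow_mul_of_reduce (hln : ∀ a : A, ∃ n, (δ ^ n) a = 0) {s : A}
    {n : ℕ} (hred : ∀ d a, (δ ^ (d + 1)) a = 0 →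
      ∃ b k, (δ ^ d) (a * s ^ k - s ^ n * b) = 0)
    (a : A) : ∃ b k, a * s ^ k = s ^ n * b := by
  obtain ⟨N, hN⟩ := hln a
  induction N generalizing a with
  | zero => exact ⟨0, 0, by simp_all⟩
  | succ d ih =>
    obtain ⟨b, k, hr⟩ := hred d a hN
    obtain ⟨b', k', hr'⟩ := ih _ hr
    refine ⟨b * s ^ k' + b', k + k', ?_⟩
    rw [pow_add, mul_add, ← hr', sub_mul]
    noncomm_ring

theorem exists_pow_mul_eq_mul_pow_of_reduce (hln : ∀ a : A, ∃ n, (δ ^ n) a = 0) {s : A}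
    {n : ℕ} (hred : ∀ d a, (δ ^ (d + 1)) a = 0 →
      ∃ b k, (δ ^ d) (s ^ k * a - b * s ^ n) = 0)
    (a : A) : ∃ b k, s ^ k * a = b * s ^ n := by
  obtain ⟨N, hN⟩ := hln a
  induction N generalizing a with
  | zero => exact ⟨0, 0, by simp_all⟩
  | succ d ih =>
    obtain ⟨b, k, hr⟩ := hred d a hN
    obtain ⟨b', k', hr'⟩ := ih _ hr
    refine ⟨s ^ k' * b + b', k' + k, ?_⟩
    rw [pow_add, add_mul, ← hr', mul_sub]
    noncomm_ring

namespace IsQSkewDerivation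

variable {e f : A} {m : ℕ}

theorem exists_pow_apply_mul_pow_eq [IsDomain A] (hδ : IsQSkewDerivation σ δ q)
    (hln : ∀ a : A, ∃ n, (δ ^ n) a = 0) (hqB : ∀ M N, qBinom (q : K)⁻¹ (M + N) M ≠ 0)
    (hpow : ∀ p, HasTopTerm δ (e ^ p) (m * p) (f ^ p)) (hf : f ≠ 0) {μ : K}
    (hfσ : σ f = μ • f) {a b : A} {d k N : ℕ} (ha : HasDegree δ a d)
    (hab : a * e ^ k = e ^ N * b) : ∃ w, δ w = 0 ∧ (δ ^ d) a * f ^ k = f ^ N * w := by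
  have hdeg : ∀ p, HasDegree δ (e ^ p) (m * p) := fun p => (hpow p).hasDegree (pow_ne_zero p hf)
  have hb : b ≠ 0 := by
    rintro rfl
    exact mul_ne_zero ha.ne_zero (hdeg k).ne_zero (by rw [hab, mul_zero])
  obtain ⟨db, hdb⟩ := exists_hasDegree (hln b) hb
  have hL := hδ.hasDegree_mul (hqB _ _) ha (hdeg k)
  rw [hab] at hL
  have hdeq := hL.unique (hδ.hasDegree_mul (hqB _ _) (hdeg N) hdb)
  have htop : (δ ^ (d + m * k)) (a * e ^ k) = (δ ^ (m * N + db)) (e ^ N * b) := by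
    rw [hab, hdeq]
  obtain ⟨-, c, hc, hck⟩ := hpow k
  obtain ⟨-, c', -, hcN⟩ := hpow N
  have hμ := AlgEquiv.ne_zero_of_apply_eq_smul hf hfσ
  have hfk : (σ ^ d) (f ^ k) = (μ ^ k) ^ d • f ^ k :=
    AlgEquiv.pow_apply_of_apply_eq_smul (by rw [map_pow, hfσ, smul_pow]) d
  rw [hδ.pow_add_apply_mul ha.2 (hdeg k).2, hδ.pow_add_apply_mul (hdeg N).2 hdb.2, hck, hcN,
    map_smul, hfk, smul_smul, mul_smul_comm, smul_mul_assoc, smul_smul, smul_smul] at htop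
  set Y := qBinom (q : K)⁻¹ (d + m * k) d * (c * (μ ^ k) ^ d)
  have hY : Y ≠ 0 := mul_ne_zero (hqB _ _) (mul_ne_zero hc (pow_ne_zero _ (pow_ne_zero _ hμ)))
  set v := (σ ^ (m * N)) ((δ ^ db) b)
  have hv : δ v = 0 := by
    rw [hδ.apply_pow_apply_eq_zero_iff, ← Module.End.mul_apply, ← pow_succ']
    exact hdb.2
  set X := qBinom (q : K)⁻¹ (m * N + db) (m * N) * c'
  refine ⟨Y⁻¹ • X • v, by rw [map_smul, map_smul, hv, smul_zero, smul_zero], ?_⟩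
  rw [mul_smul_comm, mul_smul_comm, ← htop, inv_smul_smul₀ hY]

theorem exists_pow_mul_pow_apply_eq [IsDomain A] (hδ : IsQSkewDerivation σ δ q)
    (hln : ∀ a : A, ∃ n, (δ ^ n) a = 0) (hqB : ∀ M N, qBinom (q : K)⁻¹ (M + N) M ≠ 0)
    (hpow : ∀ p, HasTopTerm δ (e ^ p) (m * p) (f ^ p)) (hf : f ≠ 0) {μ : K}
    (hfσ : σ f = μ • f) {a b : A} {d k N : ℕ} (ha : HasDegree δ a d)
    (hab : e ^ k * a = b * e ^ N) : ∃ w, δ w = 0 ∧ f ^ k * (δ ^ d) a = w * f ^ N := by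
  have hdeg : ∀ p, HasDegree δ (e ^ p) (m * p) := fun p => (hpow p).hasDegree (pow_ne_zero p hf)
  have hb : b ≠ 0 := by
    rintro rfl
    exact mul_ne_zero (hdeg k).ne_zero ha.ne_zero (by rw [hab, zero_mul])
  obtain ⟨db, hdb⟩ := exists_hasDegree (hln b) hb
  have hL := hδ.hasDegree_mul (hqB _ _) (hdeg k) ha
  rw [hab] at hL
  have hdeq := hL.unique (hδ.hasDegree_mul (hqB _ _) hdb (hdeg N))
  have htop : (δ ^ (m * k + d)) (e ^ k * a) = (δ ^ (db + m * N)) (b * e ^ N) := by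
    rw [hab, hdeq]
  obtain ⟨-, c, hc, hck⟩ := hpow k
  obtain ⟨-, c', -, hcN⟩ := hpow N
  have hμ := AlgEquiv.ne_zero_of_apply_eq_smul hf hfσ
  have hfp : ∀ p, σ (f ^ p) = μ ^ p • f ^ p := fun p => by rw [map_pow, hfσ, smul_pow]
  have hτ : ∀ p, (σ ^ (m * k)).symm (f ^ p) = ((μ ^ p) ^ (m * k))⁻¹ • f ^ p := fun p =>
    AlgEquiv.symm_apply_of_apply_eq_smul (AlgEquiv.pow_apply_of_apply_eq_smul (hfp p) _)
  rw [hδ.pow_add_apply_mul (hdeg k).2 ha.2, hδ.pow_add_apply_mul hdb.2 (hdeg N).2, hck, hcN,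
    map_smul, AlgEquiv.pow_apply_of_apply_eq_smul (hfp N), smul_mul_assoc, smul_smul,
    mul_smul_comm, smul_smul] at htop
  apply_fun (σ ^ (m * k)).symm at htop
  simp only [map_smul, map_mul, AlgEquiv.symm_apply_apply, hτ, smul_mul_assoc, mul_smul_comm,
    smul_smul] at htop
  set Y := qBinom (q : K)⁻¹ (m * k + d) (m * k) * c * ((μ ^ k) ^ (m * k))⁻¹
  have hY : Y ≠ 0 :=
    mul_ne_zero (mul_ne_zero (hqB _ _) hc) (inv_ne_zero (pow_ne_zero _ (pow_ne_zero _ hμ)))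
  set X := qBinom (q : K)⁻¹ (db + m * N) db * c' * (μ ^ N) ^ db * ((μ ^ N) ^ (m * k))⁻¹
  set v := (σ ^ (m * k)).symm ((δ ^ db) b)
  have hv : δ v = 0 := by
    rw [← hδ.apply_pow_apply_eq_zero_iff (m * k), AlgEquiv.apply_symm_apply,
      ← Module.End.mul_apply, ← pow_succ']
    exact hdb.2
  refine ⟨Y⁻¹ • X • v, by rw [map_smul, map_smul, hv, smul_zero, smul_zero], ?_⟩
  rw [smul_mul_assoc, smul_mul_assoc, ← htop, inv_smul_smul₀ hY]

theorem exists_mul_pow_eq_pow_mul [IsDomain A] (hδ : IsQSkewDerivation σ δ q)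
    (hln : ∀ a : A, ∃ n, (δ ^ n) a = 0) (hqB : ∀ M N, qBinom (q : K)⁻¹ (M + N) M ≠ 0)
    (hm : 0 < m) (hpow : ∀ p, HasTopTerm δ (e ^ p) (m * p) (f ^ p)) (hf : f ≠ 0)
    (hfδ : δ f = 0) {μ : K} (hfσ : σ f = μ • f)
    (hore : ∀ (a : A) (n : ℕ), ∃ (b : A) (k : ℕ), a * e ^ k = e ^ n * b) (a : A) (n : ℕ) :
    ∃ (b : A) (k : ℕ), a * f ^ k = f ^ n * b := by
  refine exists_mul_pow_eq_pow_mul_of_reduce hln (fun d a ha => ?_) a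
  by_cases had : (δ ^ d) a = 0
  · exact ⟨0, 0, by simpa using had⟩
  obtain ⟨b₀, k, hk⟩ := hore a (n + d)
  obtain ⟨w, hw, hkey⟩ := hδ.exists_pow_apply_mul_pow_eq hln hqB hpow hf hfσ ⟨had, ha⟩ hk
  obtain ⟨-, c, hc, hcd⟩ := hpow d
  obtain ⟨b, hb⟩ := hδ.exists_pow_apply_eq_mul_const hc (Nat.le_mul_of_pos_left d hm) hcd
    (w := (μ ^ k) ^ d • w) (by rw [map_smul, hw, smul_zero])
  refine ⟨b, k, ?_⟩
  rw [map_sub, hδ.pow_apply_mul_const (hδ.apply_pow_eq_zero hfδ k),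
    AlgEquiv.pow_apply_of_apply_eq_smul (by rw [map_pow, hfσ, smul_pow]), mul_smul_comm, hkey,
    hδ.pow_apply_const_mul (hδ.apply_pow_eq_zero hfδ n), hb, pow_add, mul_assoc, mul_smul_comm,
    mul_smul_comm, sub_self]

theorem exists_pow_mul_eq_mul_pow [IsDomain A] (hδ : IsQSkewDerivation σ δ q)
    (hln : ∀ a : A, ∃ n, (δ ^ n) a = 0) (hqB : ∀ M N, qBinom (q : K)⁻¹ (M + N) M ≠ 0)
    (hm : 0 < m) (hpow : ∀ p, HasTopTerm δ (e ^ p) (m * p) (f ^ p)) (hf : f ≠ 0)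
    (hfδ : δ f = 0) {μ : K} (hfσ : σ f = μ • f)
    (hore : ∀ (a : A) (n : ℕ), ∃ (b : A) (k : ℕ), e ^ k * a = b * e ^ n) (a : A) (n : ℕ) :
    ∃ (b : A) (k : ℕ), f ^ k * a = b * f ^ n := by
  refine exists_pow_mul_eq_mul_pow_of_reduce hln (fun d a ha => ?_) a
  by_cases had : (δ ^ d) a = 0
  · exact ⟨0, 0, by simpa using had⟩
  obtain ⟨b₀, k, hk⟩ := hore a (n + d)
  obtain ⟨w, hw, hkey⟩ := hδ.exists_pow_mul_pow_apply_eq hln hqB hpow hf hfσ ⟨had, ha⟩ hk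
  have hμ := AlgEquiv.ne_zero_of_apply_eq_smul hf hfσ
  obtain ⟨-, c, hc, hcd⟩ := hpow d
  obtain ⟨b, hb⟩ := hδ.exists_pow_apply_eq_const_mul hc (Nat.le_mul_of_pos_left d hm) hcd
    (w := ((μ ^ n) ^ d)⁻¹ • w) (by rw [map_smul, hw, smul_zero])
  refine ⟨b, k, ?_⟩
  rw [map_sub, hδ.pow_apply_const_mul (hδ.apply_pow_eq_zero hfδ k), hkey,
    hδ.pow_apply_mul_const (hδ.apply_pow_eq_zero hfδ n),
    AlgEquiv.pow_apply_of_apply_eq_smul (by rw [map_pow, hfσ, smul_pow]), hb, mul_smul_comm,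
    smul_mul_assoc, smul_mul_assoc, smul_smul,
    mul_inv_cancel₀ (pow_ne_zero _ (pow_ne_zero _ hμ)), one_smul, mul_assoc, ← pow_add,
    add_comm d n, sub_self]

end IsQSkewDerivation

end Ore

end SkewDerivation

theorem ore_set_of_skew_derivation_top_term_general
    {K : Type*} [Field K] {A : Type*} [Ring A] [Algebra K A] [IsDomain A]
    (σ : A ≃ₐ[K] A) (δ : Module.End K A)
    (hskew : ∀ a b : A, δ (a * b) = δ a * σ b + a * δ b)
    (hln : ∀ a : A, ∃ n : ℕ, (δ ^ n) a = 0)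
    (q' : Kˣ)
    (hconj : ∀ a : A, σ (δ (σ.symm a)) = (q' : K) • δ a)
    -- `δ` is right regular
    (hreg : ∀ (a b : A) (ta tb : K) (m n : ℕ),
      a ≠ 0 → σ a = ta • a → (δ ^ (m + 1)) a = 0 → (δ ^ m) a ≠ 0 →
      b ≠ 0 → σ b = tb • b → (δ ^ (n + 1)) b = 0 → (δ ^ n) b ≠ 0 →
      ∀ k : ℕ, n ≤ k → k ≤ m + n →
        ∃ s : ℕ → K, s 0 ≠ 0 ∧
          (δ ^ k) (a * b) =
            ∑ i ∈ Finset.range (m + n - k + 1),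
              s i • ((δ ^ (k - n + i)) a * (δ ^ (n - i)) b))
    -- `e` is a `σ`-eigenvector of `δ`-degree `m`
    (e : A) (te : K) (m : ℕ)
    (heig : σ e = te • e)
    (hdeg1 : (δ ^ (m + 1)) e = 0) (hdeg2 : (δ ^ m) e ≠ 0)
    -- the powers of `e` satisfy the right and left Ore conditions in `A`
    (hore_r : ∀ (a : A) (n : ℕ), ∃ (b : A) (k : ℕ), a * e ^ k = e ^ n * b)
    (hore_l : ∀ (a : A) (n : ℕ), ∃ (b : A) (k : ℕ), e ^ k * a = b * e ^ n) :
    (∀ (a : A) (n : ℕ), ∃ (b : A) (k : ℕ),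
        a * ((δ ^ m) e) ^ k = ((δ ^ m) e) ^ n * b) ∧
    (∀ (a : A) (n : ℕ), ∃ (b : A) (k : ℕ),
        ((δ ^ m) e) ^ k * a = b * ((δ ^ m) e) ^ n) := by
  rcases Nat.eq_zero_or_pos m with rfl | hm
  · simpa using ⟨hore_r, hore_l⟩
  have hδ : IsQSkewDerivation σ δ q' := ⟨hskew, hconj⟩
  have hreg : IsRightRegularSkewDerivation σ δ := hreg
  have he : HasDegree δ e m := ⟨hdeg2, hdeg1⟩
  have hpow := hreg.hasTopTerm_pow hδ heig he
  have hqB := hreg.qBinom_ne_zero_of_pos hδ heig he hm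
  have hfδ : δ ((δ ^ m) e) = 0 := by rwa [← Module.End.mul_apply, ← pow_succ']
  have hfσ := hδ.map_pow_apply_of_apply_eq_smul heig m
  exact ⟨hδ.exists_mul_pow_eq_pow_mul hln hqB hm hpow hdeg2 hfδ hfσ hore_r,
    hδ.exists_pow_mul_eq_mul_pow hln hqB hm hpow hdeg2 hfδ hfσ hore_l⟩

/-- Joseph's Ore-set lemma: if `δ` is a locally nilpotent, right regular, right skew
`σ`-derivation of a domain `A` with `σ δ σ⁻¹ = q' δ`, `e ∈ A` is a `σ`-eigenvector
of `δ`-degree `m`, and the powers of `e` satisfy the left and right Ore conditions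
in `A`, then the powers of `δ^m(e)` also satisfy the left and right Ore
conditions in `A`. -/
theorem ore_set_of_skew_derivation_top_term
    {K : Type*} [Field K] {A : Type*} [Ring A] [Algebra K A] [IsDomain A]
    (σ : A ≃ₐ[K] A) (δ : Module.End K A)
    (hskew : ∀ a b : A, δ (a * b) = δ a * σ b + a * δ b)
    (hln : ∀ a : A, ∃ n : ℕ, (δ ^ n) a = 0)
    (q' : Kˣ)
    (hconj : ∀ a : A, σ (δ (σ.symm a)) = (q' : K) • δ a)
    -- `δ` is right regular
    (hreg : ∀ (a b : A) (ta tb : K) (m n : ℕ),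
      a ≠ 0 → σ a = ta • a → (δ ^ (m + 1)) a = 0 → (δ ^ m) a ≠ 0 →
      b ≠ 0 → σ b = tb • b → (δ ^ (n + 1)) b = 0 → (δ ^ n) b ≠ 0 →
      ∀ k : ℕ, n ≤ k → k ≤ m + n →
        ∃ s : ℕ → K, s 0 ≠ 0 ∧
          (δ ^ k) (a * b) =
            ∑ i ∈ Finset.range (m + n - k + 1),
              s i • ((δ ^ (k - n + i)) a * (δ ^ (n - i)) b))
    -- `e` is a `σ`-eigenvector of `δ`-degree `m`
    (e : A) (te : K) (m : ℕ)
    (he : e ≠ 0) (heig : σ e = te • e)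
    (hdeg1 : (δ ^ (m + 1)) e = 0) (hdeg2 : (δ ^ m) e ≠ 0)
    -- the powers of `e` satisfy the right and left Ore conditions in `A`
    (hore_r : ∀ (a : A) (n : ℕ), ∃ (b : A) (k : ℕ), a * e ^ k = e ^ n * b)
    (hore_l : ∀ (a : A) (n : ℕ), ∃ (b : A) (k : ℕ), e ^ k * a = b * e ^ n) :
    (∀ (a : A) (n : ℕ), ∃ (b : A) (k : ℕ),
        a * ((δ ^ m) e) ^ k = ((δ ^ m) e) ^ n * b) ∧
    (∀ (a : A) (n : ℕ), ∃ (b : A) (k : ℕ),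
        ((δ ^ m) e) ^ k * a = b * ((δ ^ m) e) ^ n) :=
  ore_set_of_skew_derivation_top_term_general σ δ hskew hln q' hconj hreg e te m heig hdeg1 hdeg2
    hore_r hore_l
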